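/- arXiv:2212.01149 — 3 statements merged into one kernel-verified Lean document; each statement's English description precedes it below -/
import Mathlib

section
/- If E is a covariant event (E ∈ R) with 𝔉 ⊆ E, then B_∞^c ⊆ E. -/
open MeasurableSpace MeasureTheory Set

/-- An (infinite) causal set: an irreflexive, transitive relation on ℕ
satisfying the natural-labeling condition `x ≺ y → x < y`.  The type of all
such causets plays the role of Ω. -/
structure Causet where
  rel : ℕ → ℕ → Prop
  irrefl : ∀ x, ¬ rel x x
  trans : ∀ x y z, rel x y → rel y z → rel x z
  lt_of_rel : ∀ x y, rel x y → x < y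

/-- A finite causet on ground-set `{0, …, n-1}` with natural labeling. -/
structure FinCauset (n : ℕ) where
  rel : ℕ → ℕ → Prop
  bounded : ∀ x y, rel x y → x < n ∧ y < n
  irrefl : ∀ x, ¬ rel x x
  trans : ∀ x y z, rel x y → rel y z → rel x z
  lt_of_rel : ∀ x y, rel x y → x < y

/-- The cylinder set of a finite causet `C` on `{0,…,n-1}`: all causets whose
restriction to `{0,…,n-1}` equals `C`. -/
def cyl {n : ℕ} (C : FinCauset n) : Set Causet :=
  { D | ∀ x y, x < n → y < n → (D.rel x y ↔ C.rel x y) }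

/-- The σ-algebra 𝔐 generated by all cylinder sets. -/
def cylAlgebra : MeasurableSpace Causet :=
  .generateFrom { E | ∃ n, 0 < n ∧ ∃ C : FinCauset n, E = cyl C }

/-- Order isomorphism between two (infinite) causets. -/
def Iso (C D : Causet) : Prop :=
  ∃ f : ℕ ≃ ℕ, ∀ x y, C.rel x y ↔ D.rel (f x) (f y)

/-- A set of causets is covariant if it is closed under order isomorphism. -/
def CovariantEvent (E : Set Causet) : Prop :=
  ∀ C D : Causet, Iso C D → C ∈ E → D ∈ E

/-- Membership in the σ-algebra R of covariant events: measurable w.r.t. 𝔐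
and closed under order isomorphism. -/
def MemR (E : Set Causet) : Prop :=
  MeasurableSet[cylAlgebra] E ∧ CovariantEvent E

/-- A stem of a causet: a finite down-set. -/
def IsStem (D : Causet) (A : Set ℕ) : Prop :=
  A.Finite ∧ ∀ x y, y ∈ A → D.rel x y → x ∈ A

/-- The stem-set of (the order of) the finite causet `C`: all causets
containing a stem order-isomorphic to `C`. -/
def stemSet {n : ℕ} (C : FinCauset n) : Set Causet :=
  { D | ∃ A : Set ℕ, IsStem D A ∧
      ∃ f : {x : ℕ // x < n} ≃ A,
        ∀ x y : {x : ℕ // x < n}, C.rel x.1 y.1 ↔ D.rel (f x).1 (f y).1 }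

/-- The collection S of all stem-sets. -/
def stemSets : Set (Set Causet) :=
  { E | ∃ n, 0 < n ∧ ∃ C : FinCauset n, E = stemSet C }

/-- The σ-algebra R(S) generated by the stem-sets. -/
def stemAlgebra : MeasurableSpace Causet := .generateFrom stemSets

/-- A rogue: a causet `U` for which there is a non-isomorphic causet `V`
belonging to exactly the same stem-sets. -/
def IsRogue (U : Causet) : Prop :=
  ∃ V : Causet, ¬ Iso U V ∧
    ∀ (n : ℕ) (C : FinCauset n), 0 < n → (V ∈ stemSet C ↔ U ∈ stemSet C)

/-- Θ: the set of rogues. -/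
def Theta : Set Causet := { U | IsRogue U }

/-- `A` is the past of a break of `D`: `(A, Aᶜ)` is a partition into nonempty
parts with every element of `A` below every element of `Aᶜ`. -/
def IsBreakPast (D : Causet) (A : Set ℕ) : Prop :=
  A.Nonempty ∧ Aᶜ.Nonempty ∧ ∀ a ∈ A, ∀ b ∈ Aᶜ, D.rel a b

/-- B_∞: the set of causets with infinitely many breaks. -/
def Binf : Set Causet := { D | { A : Set ℕ | IsBreakPast D A }.Infinite }

/-- `x` is a maximal element of the restriction of the finite causet `C`
to the elements `< k`. -/
def FMaximalBelow {n : ℕ} (C : FinCauset n) (k x : ℕ) : Prop :=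
  x < k ∧ ∀ y, y < k → ¬ C.rel x y

/-- A principal finite causet: it has a unique maximal element. -/
def Principal {n : ℕ} (C : FinCauset n) : Prop :=
  ∃! x, FMaximalBelow C n x

/-- 𝔐_b: the σ-algebra generated by the principal cylinder sets. -/
def principalCylAlgebra : MeasurableSpace Causet :=
  .generateFrom { E | ∃ n, ∃ C : FinCauset n, Principal C ∧ E = cyl C }

/-- Membership in R_b: covariant events containing all or none of the
causets with finitely many breaks. -/
def MemRb (E : Set Causet) : Prop :=
  MemR E ∧ (Binfᶜ ⊆ E ∨ Binfᶜ ⊆ Eᶜ)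

/-- `x` is a maximal element of the restriction of the causet `D` to `{0,…,n}`. -/
def RMaximal (D : Causet) (n x : ℕ) : Prop :=
  x ≤ n ∧ ∀ y, y ≤ n → ¬ D.rel x y

/-- 𝔉: causets all but finitely many of whose initial-segment restrictions
have at least two maximal elements. -/
def Ffin : Set Causet :=
  { D | ∃ m : ℕ, ∀ n, m < n →
      ∃ x y, x ≠ y ∧ RMaximal D n x ∧ RMaximal D n y }

/-- The restriction of the m-causet `D` to `{0,…,n-1}` equals the n-causet `C`. -/
def RestrEq {m n : ℕ} (D : FinCauset m) (C : FinCauset n) : Prop :=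
  ∀ x y, x < n → y < n → (D.rel x y ↔ C.rel x y)

/-- Γ_{C}: the causets containing `C` as a stem but containing no principal
causet of larger cardinality as a stem (i.e. `cyl C` minus the cylinder sets
of the principal causets extending `C`). -/
def Gamma {n : ℕ} (C : FinCauset n) : Set Causet :=
  cyl C \ { X | ∃ m, n < m ∧ ∃ D : FinCauset m, Principal D ∧ RestrEq D C ∧ X ∈ cyl D }

/-- Ŝ: the collection of principal stem-sets. -/
def principalStemSets : Set (Set Causet) :=
  { E | ∃ n, ∃ C : FinCauset n, Principal C ∧ E = stemSet C }

/-- R(Ŝ): the σ-algebra generated by the principal stem-sets. -/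
def principalStemAlgebra : MeasurableSpace Causet := .generateFrom principalStemSets

/-- `x` is a post of `D`: every other element is related to `x`. -/
def IsPost (D : Causet) (x : ℕ) : Prop :=
  ∀ y, y ≠ x → D.rel y x ∨ D.rel x y

/-- P_∞: the set of causets with infinitely many posts. -/
def Pinf : Set Causet := { D | { x | IsPost D x }.Infinite }

/-- A doubly principal finite causet: both it and its restriction to
`{0,…,n-2}` have a unique maximal element. -/
def DoublyPrincipal {n : ℕ} (C : FinCauset n) : Prop :=
  Principal C ∧ ∃! x, FMaximalBelow C (n - 1) x

/-- 𝔐_p: the σ-algebra generated by the doubly principal cylinder sets. -/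
def doublyPrincipalCylAlgebra : MeasurableSpace Causet :=
  .generateFrom { E | ∃ n, ∃ C : FinCauset n, DoublyPrincipal C ∧ E = cyl C }

/-- The σ-algebra generated by the doubly principal stem-sets. -/
def doublyPrincipalStemAlgebra : MeasurableSpace Causet :=
  .generateFrom { E | ∃ n, ∃ C : FinCauset n, DoublyPrincipal C ∧ E = stemSet C }


/-!
A causet `D` with finitely many breaks has finitely many break pasts, all finite, so some label
`M` lies in none of them. Relabel `D` by keeping `0, …, M` and then repeatedly appending the least
element whose past is already listed but which does not lie above everything listed: one exists,
since otherwise the listed elements, a finite set containing `M`, would be the past of a break.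
Each appended element is maximal among the listed ones together with an older maximal element,
so the relabeled causet lies in `𝔉`, and taking the least candidate each time exhausts `ℕ`.
Covariance of `E` carries membership back to `D`.
-/

open Finset

namespace Causet

variable (D : Causet)

def IsDownSet (S : Finset ℕ) : Prop :=
  ∀ x ∈ S, ∀ y, D.rel y x → y ∈ S

/-- Appending `x` to the down-set `S` keeps it a down-set, and `x` is not above all of `S`. -/
def Admissible (S : Finset ℕ) (x : ℕ) : Prop :=
  x ∉ S ∧ (∀ y, D.rel y x → y ∈ S) ∧ ∃ a ∈ S, ¬ D.rel a x

def IsMaxIn (S : Finset ℕ) (u : ℕ) : Prop :=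
  u ∈ S ∧ ∀ y ∈ S, ¬ D.rel u y

/-- Junk value `0` when no element is admissible. -/
noncomputable def nextAdmissible (S : Finset ℕ) : ℕ :=
  sInf {x | D.Admissible S x}

def relabel (g : ℕ → ℕ) (hg : ∀ i j, D.rel (g i) (g j) → i < j) : Causet where
  rel i j := D.rel (g i) (g j)
  irrefl i := D.irrefl (g i)
  trans _ _ _ := D.trans _ _ _
  lt_of_rel := hg

variable {D}

lemma IsDownSet.insert {S : Finset ℕ} (hS : D.IsDownSet S) {e : ℕ}
    (he : ∀ y, D.rel y e → y ∈ S) : D.IsDownSet (insert e S) := by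
  intro x hx y hy
  rcases mem_insert.1 hx with rfl | hx
  · exact mem_insert_of_mem (he y hy)
  · exact mem_insert_of_mem (hS x hx y hy)

lemma isDownSet_range (n : ℕ) : D.IsDownSet (range n) :=
  fun _ hx _ hy => mem_range.2 ((D.lt_of_rel _ _ hy).trans (mem_range.1 hx))

/-- If `a ∈ S` is not below `b ∉ S`, the least label outside `S` in the closed past of `b`
is admissible. -/
lemma exists_admissible {S : Finset ℕ} (hS : S.Nonempty) (hbreak : ¬ IsBreakPast D ↑S) :
    ∃ x, D.Admissible S x := by
  obtain ⟨a, ha, b, hb, hab⟩ : ∃ a ∈ S, ∃ b ∉ S, ¬ D.rel a b := by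
    by_contra! h
    exact hbreak ⟨hS, S.exists_notMem, fun a ha b hb => h a ha b hb⟩
  set P : Set ℕ := {y | y ∉ S ∧ (y = b ∨ D.rel y b)}
  have hP : sInf P ∈ P := Nat.sInf_mem ⟨b, hb, Or.inl rfl⟩
  obtain ⟨hxS, hxb⟩ := hP
  have below_b : ∀ {z}, D.rel z (sInf P) → D.rel z b := fun hz =>
    hxb.elim (fun h => h ▸ hz) (D.trans _ _ _ hz)
  refine ⟨sInf P, hxS, fun y hy => ?_, a, ha, fun h => hab (below_b h)⟩
  by_contra hyS
  exact Nat.notMem_of_lt_sInf (D.lt_of_rel _ _ hy) ⟨hyS, Or.inr (below_b hy)⟩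

/-- The element of `S` of largest label that is not below `e` is maximal in `insert e S`. -/
lemma exists_isMaxIn_insert_ne {S : Finset ℕ} {e : ℕ}
    (he : D.Admissible S e) : ∃ u, u ≠ e ∧ D.IsMaxIn (insert e S) u := by
  classical
  obtain ⟨heS, -, a, ha, hae⟩ := he
  obtain ⟨w, hw, hwmax⟩ :=
    exists_max_image (S.filter fun w => ¬ D.rel w e) id ⟨a, mem_filter.2 ⟨ha, hae⟩⟩
  obtain ⟨hwS, hwe⟩ := mem_filter.1 hw
  refine ⟨w, fun h => heS (h ▸ hwS), mem_insert_of_mem hwS, fun y hy hwy => ?_⟩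
  rcases mem_insert.1 hy with rfl | hyS
  · exact hwe hwy
  · have hye : ¬ D.rel y e := fun h => hwe (D.trans _ _ _ hwy h)
    exact (D.lt_of_rel _ _ hwy).not_ge (hwmax y (mem_filter.2 ⟨hyS, hye⟩))

lemma isMaxIn_insert {S : Finset ℕ} (hS : D.IsDownSet S) {e : ℕ} (he : D.Admissible S e) :
    D.IsMaxIn (insert e S) e := by
  refine ⟨mem_insert_self e S, fun y hy hey => ?_⟩
  rcases mem_insert.1 hy with rfl | hyS
  · exact D.irrefl y hey
  · exact he.1 (hS y hyS e hey)

lemma admissible_nextAdmissible {S : Finset ℕ} (h : ∃ x, D.Admissible S x) :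
    D.Admissible S (D.nextAdmissible S) :=
  Nat.sInf_mem h

lemma nextAdmissible_eq {S : Finset ℕ} {t : ℕ} (hS : range t ⊆ S) (ht : D.Admissible S t) :
    D.nextAdmissible S = t := by
  refine le_antisymm (Nat.sInf_le ht) (not_lt.1 fun hlt => ?_)
  exact (admissible_nextAdmissible ⟨t, ht⟩).1 (hS (mem_range.2 hlt))

lemma iso_relabel (g : ℕ ≃ ℕ) (hg : ∀ i j, D.rel (g i) (g j) → i < j) :
    Iso (D.relabel g hg) D :=
  ⟨g, fun _ _ => Iff.rfl⟩

lemma relabel_mem_Ffin {g : ℕ → ℕ} (hg : ∀ i j, D.rel (g i) (g j) → i < j) {m : ℕ}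
    (h : ∀ n, m < n → ∃ u v, u ≠ v ∧ D.IsMaxIn ((range (n + 1)).image g) u ∧
      D.IsMaxIn ((range (n + 1)).image g) v) :
    D.relabel g hg ∈ Ffin := by
  refine ⟨m, fun n hn => ?_⟩
  obtain ⟨u, v, huv, ⟨hu, humax⟩, ⟨hv, hvmax⟩⟩ := h n hn
  obtain ⟨x, hx, rfl⟩ := mem_image.1 hu
  obtain ⟨y, hy, rfl⟩ := mem_image.1 hv
  have maximal : ∀ {x}, x ∈ range (n + 1) →
      (∀ z ∈ (range (n + 1)).image g, ¬ D.rel (g x) z) → RMaximal (D.relabel g hg) n x :=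
    fun hx hmax => ⟨Nat.lt_succ_iff.1 (mem_range.1 hx), fun z hz =>
      hmax _ (mem_image_of_mem g (mem_range.2 (Nat.lt_succ_of_le hz)))⟩
  exact ⟨x, y, fun h => huv (h ▸ rfl), maximal hx humax, maximal hy hvmax⟩

lemma exists_forall_isBreakPast_notMem (hD : D ∉ Binf) :
    ∃ M, ∀ A, IsBreakPast D A → M ∉ A := by
  have hfin : ∀ A, IsBreakPast D A → A.Finite := fun A ⟨_, ⟨b, hb⟩, hrel⟩ =>
    (Set.finite_Iio b).subset fun a ha => D.lt_of_rel _ _ (hrel a ha b hb)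
  obtain ⟨M, hM⟩ := ((Set.not_infinite.1 hD).biUnion hfin).exists_notMem
  exact ⟨M, fun A hA hMA => hM (Set.mem_biUnion hA hMA)⟩

variable (D) (M : ℕ)

noncomputable def stage : ℕ → Finset ℕ
  | 0 => range (M + 1)
  | k + 1 => insert (D.nextAdmissible (stage k)) (stage k)

/-- The relabeling: `enum n` is the element receiving label `n`, so that `stage k` is the set of
the first `M + 1 + k` labeled elements. -/
noncomputable def enum (n : ℕ) : ℕ :=
  if n ≤ M then n else D.nextAdmissible (D.stage M (n - (M + 1)))

variable {D M}

lemma stage_mono : Monotone (D.stage M) :=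
  monotone_nat_of_le_succ fun _ => subset_insert _ _

lemma image_enum_range_of_le {n : ℕ} (hn : n ≤ M + 1) :
    (range n).image (D.enum M) = range n := by
  refine (Finset.image_congr fun i hi => ?_).trans image_id
  exact if_pos (Nat.lt_succ_iff.1 ((mem_range.1 hi).trans_le hn))

lemma image_enum_range {n : ℕ} (hn : M + 1 ≤ n) :
    (range n).image (D.enum M) = D.stage M (n - (M + 1)) := by
  induction n, hn using Nat.le_induction with
  | base => rw [image_enum_range_of_le le_rfl, Nat.sub_self]; rfl
  | succ n hn ih =>
    rw [range_add_one, image_insert, ih, Nat.sub_add_comm hn]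
    rw [enum, if_neg (by omega)]
    rfl

section NoBreakThroughM

variable (hM : ∀ A, IsBreakPast D A → M ∉ A)
include hM

lemma admissible_nextAdmissible_stage (k : ℕ) :
    D.Admissible (D.stage M k) (D.nextAdmissible (D.stage M k)) := by
  have hMk : M ∈ D.stage M k := stage_mono (Nat.zero_le k) (self_mem_range_succ M)
  exact admissible_nextAdmissible (exists_admissible ⟨M, hMk⟩ fun h => hM _ h hMk)

lemma isDownSet_stage (k : ℕ) : D.IsDownSet (D.stage M k) := by
  induction k with
  | zero => exact isDownSet_range _
  | succ k ih => exact ih.insert (admissible_nextAdmissible_stage hM k).2.1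

lemma exists_isMaxIn_stage_succ (k : ℕ) :
    ∃ u v, u ≠ v ∧ D.IsMaxIn (D.stage M (k + 1)) u ∧ D.IsMaxIn (D.stage M (k + 1)) v := by
  have he := admissible_nextAdmissible_stage hM k
  obtain ⟨u, hu, humax⟩ := exists_isMaxIn_insert_ne he
  exact ⟨u, _, hu, humax, isMaxIn_insert (isDownSet_stage hM k) he⟩

/-- If the element appended at step `K + 1` is not `t`, it exceeds `t`, which makes `t`
admissible, and hence chosen, at the next step. -/
lemma mem_stage_add_two {t K : ℕ} (hK : range t ⊆ D.stage M K) : t ∈ D.stage M (K + 2) := by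
  by_cases htK : t ∈ D.stage M K
  · exact stage_mono (Nat.le_add_right K 2) htK
  obtain ⟨heK, -⟩ := admissible_nextAdmissible_stage hM K
  set e := D.nextAdmissible (D.stage M K)
  have hte : t ≤ e := not_lt.1 fun h => heK (hK (mem_range.2 h))
  obtain hte | hte := hte.eq_or_lt
  · exact stage_mono (Nat.le_succ _) (hte ▸ mem_insert_self e _ : t ∈ D.stage M (K + 1))
  have hK' : range t ⊆ D.stage M (K + 1) := hK.trans (subset_insert _ _)
  have ht : D.Admissible (D.stage M (K + 1)) t :=
    ⟨fun h => (mem_insert.1 h).elim hte.ne htK,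
      fun y hy => hK' (mem_range.2 (D.lt_of_rel _ _ hy)),
      e, mem_insert_self e _, fun h => (D.lt_of_rel _ _ h).not_gt hte⟩
  change t ∈ insert (D.nextAdmissible (D.stage M (K + 1))) (D.stage M (K + 1))
  rw [nextAdmissible_eq hK' ht]
  exact mem_insert_self t _

lemma exists_range_subset_stage (t : ℕ) : ∃ K, range t ⊆ D.stage M K := by
  induction t with
  | zero => exact ⟨0, by simp⟩
  | succ t ih =>
    obtain ⟨K, hK⟩ := ih
    refine ⟨K + 2, ?_⟩
    rw [range_add_one, Finset.insert_subset_iff]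
    exact ⟨mem_stage_add_two hM hK, hK.trans (stage_mono (Nat.le_add_right K 2))⟩

lemma enum_notMem_image_range (j : ℕ) : D.enum M j ∉ (range j).image (D.enum M) := by
  by_cases hj : j ≤ M
  · rw [image_enum_range_of_le (by omega), enum, if_pos hj]
    exact notMem_range_self
  · rw [image_enum_range (by omega), enum, if_neg hj]
    exact (admissible_nextAdmissible_stage hM _).1

lemma mem_image_range_of_rel_enum {d j : ℕ} (hd : D.rel d (D.enum M j)) :
    d ∈ (range j).image (D.enum M) := by
  by_cases hj : j ≤ M
  · rw [image_enum_range_of_le (by omega)]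
    rw [enum, if_pos hj] at hd
    exact mem_range.2 (D.lt_of_rel _ _ hd)
  · rw [image_enum_range (by omega)]
    rw [enum, if_neg hj] at hd
    exact (admissible_nextAdmissible_stage hM _).2.1 d hd

lemma enum_injective : Function.Injective (D.enum M) := by
  refine Function.injective_iff_pairwise_ne.2 fun i j hij h => ?_
  rcases hij.lt_or_gt with hij | hij
  · exact enum_notMem_image_range hM j (h ▸ mem_image_of_mem _ (mem_range.2 hij))
  · exact enum_notMem_image_range hM i (h ▸ mem_image_of_mem _ (mem_range.2 hij))

lemma enum_surjective : Function.Surjective (D.enum M) := by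
  intro t
  obtain ⟨K, hK⟩ := exists_range_subset_stage hM (t + 1)
  rw [← Nat.add_sub_cancel K (M + 1), ← image_enum_range (Nat.le_add_left _ _)] at hK
  obtain ⟨i, -, hi⟩ := mem_image.1 (hK (self_mem_range_succ t))
  exact ⟨i, hi⟩

lemma lt_of_rel_enum (i j : ℕ) (h : D.rel (D.enum M i) (D.enum M j)) : i < j := by
  obtain ⟨i', hi', hii'⟩ := mem_image.1 (mem_image_range_of_rel_enum hM h)
  exact enum_injective hM hii' ▸ mem_range.1 hi'

end NoBreakThroughM

lemma exists_iso_mem_Ffin (hD : D ∉ Binf) : ∃ C, Iso C D ∧ C ∈ Ffin := by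
  obtain ⟨M, hM⟩ := exists_forall_isBreakPast_notMem hD
  let g : ℕ ≃ ℕ := .ofBijective _ ⟨enum_injective hM, enum_surjective hM⟩
  refine ⟨_, iso_relabel g (lt_of_rel_enum hM), relabel_mem_Ffin (m := M) _ fun n hn => ?_⟩
  have hstage : n + 1 - (M + 1) = n - (M + 1) + 1 := by omega
  rw [show ⇑g = D.enum M from rfl, image_enum_range (by omega), hstage]
  exact exists_isMaxIn_stage_succ hM _

end Causet

/-- If E is covariant (E ∈ R) and 𝔉 ⊆ E, then B_∞ᶜ ⊆ E. -/
theorem stmt_4 (E : Set Causet) (hE : MemR E) (hF : Ffin ⊆ E) :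
    Binfᶜ ⊆ E := by
  intro D hD
  obtain ⟨C, hCD, hC⟩ := D.exists_iso_mem_Ffin hD
  exact hE.2 C D hCD (hF hC)
end

section
/- The collection of sets Γ_{C_n}, as C_n ranges over all principal finite causets (of all cardinalities), is a partition of 𝔉: the sets Γ_{C_n} are pairwise disjoint for distinct principal causets, each Γ_{C_n} is contained in 𝔉, and every C ∈ 𝔉 belongs to exactly one Γ_{C_n}. -/
open MeasurableSpace MeasureTheory Set

/-!
A causet `X` lies in `Γ_C` for a principal `n`-causet `C` exactly when `C` is the restriction
of `X` to `{0,…,n-1}` and `n` is the largest size at which the restriction of `X` is principal.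
The restriction to `{0,…,k}` is principal iff `k` is its only maximal element, so `X ∈ 𝔉` says
precisely that the sizes of principal restrictions are bounded; they always include `1`.
Hence every `X ∈ 𝔉` has such a largest size, and both `n` and `C` are determined by `X`.
-/

theorem FinCauset.ext {n : ℕ} {C D : FinCauset n} (h : C.rel = D.rel) : C = D := by
  cases C; cases D; cases h; rfl

theorem Principal.pos {n : ℕ} {C : FinCauset n} (hC : Principal C) : 0 < n := by
  obtain ⟨x, hx, -⟩ := hC
  exact Nat.zero_lt_of_lt hx.1

namespace Causet

def restrict (X : Causet) (n : ℕ) : FinCauset n where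
  rel x y := X.rel x y ∧ x < n ∧ y < n
  bounded _ _ h := h.2
  irrefl x h := X.irrefl x h.1
  trans x y z hxy hyz := ⟨X.trans x y z hxy.1 hyz.1, hxy.2.1, hyz.2.2⟩
  lt_of_rel x y h := X.lt_of_rel x y h.1

variable {X : Causet}

theorem mem_cyl_iff {n : ℕ} {C : FinCauset n} : X ∈ cyl C ↔ C = X.restrict n := by
  constructor
  · intro hX
    refine FinCauset.ext (funext₂ fun x y => propext ⟨fun h => ?_, fun h => ?_⟩)
    · obtain ⟨hx, hy⟩ := C.bounded x y h
      exact ⟨(hX x y hx hy).mpr h, hx, hy⟩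
    · exact (hX x y h.2.1 h.2.2).mp h.1
  · rintro rfl x y hx hy
    exact ⟨fun h => ⟨h, hx, hy⟩, And.left⟩

theorem fMaximalBelow_restrict_succ_iff {k x : ℕ} :
    FMaximalBelow (X.restrict (k + 1)) (k + 1) x ↔ RMaximal X k x := by
  simp only [FMaximalBelow, RMaximal, restrict, Nat.lt_succ_iff]
  exact and_congr_right fun hx => forall₂_congr fun y hy => by simp [hx, hy]

theorem rMaximal_self (k : ℕ) : RMaximal X k k :=
  ⟨le_rfl, fun _ hy hr => (X.lt_of_rel _ _ hr).not_ge hy⟩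

theorem principal_restrict_succ_iff {k : ℕ} :
    Principal (X.restrict (k + 1)) ↔ ¬ ∃ x y, x ≠ y ∧ RMaximal X k x ∧ RMaximal X k y := by
  simp only [Principal, fMaximalBelow_restrict_succ_iff]
  constructor
  · rintro ⟨z, -, hz⟩ ⟨x, y, hne, hx, hy⟩
    exact hne ((hz x hx).trans (hz y hy).symm)
  · intro h
    refine ⟨k, rMaximal_self k, fun x hx => ?_⟩
    by_contra hne
    exact h ⟨x, k, hne, hx, rMaximal_self k⟩

def principalSizes (X : Causet) : Set ℕ := {m | Principal (X.restrict m)}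

theorem one_mem_principalSizes : 1 ∈ X.principalSizes :=
  principal_restrict_succ_iff.mpr fun ⟨_, _, hne, hx, hy⟩ =>
    hne ((Nat.le_zero.mp hx.1).trans (Nat.le_zero.mp hy.1).symm)

theorem mem_Ffin_iff_bddAbove : X ∈ Ffin ↔ BddAbove X.principalSizes := by
  constructor
  · rintro ⟨m, hm⟩
    refine ⟨m + 1, fun j hj => ?_⟩
    obtain ⟨k, rfl⟩ := Nat.exists_eq_add_one_of_ne_zero (Principal.pos hj).ne'
    by_contra! hk
    exact principal_restrict_succ_iff.mp hj (hm k (by omega))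
  · rintro ⟨M, hM⟩
    refine ⟨M, fun k hk => not_not.mp fun h => ?_⟩
    have := hM (principal_restrict_succ_iff.mpr h)
    omega

theorem mem_Gamma_iff {n : ℕ} {C : FinCauset n} :
    X ∈ Gamma C ↔ X ∈ cyl C ∧ ∀ m, n < m → m ∉ X.principalSizes := by
  constructor
  · rintro ⟨hX, hno⟩
    refine ⟨hX, fun m hnm hP => hno ⟨m, hnm, X.restrict m, hP, fun x y hx hy => ?_,
      mem_cyl_iff.mpr rfl⟩⟩
    exact ⟨fun h => (hX x y hx hy).mp h.1,
      fun h => ⟨(hX x y hx hy).mpr h, hx.trans hnm, hy.trans hnm⟩⟩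
  · rintro ⟨hX, h⟩
    refine ⟨hX, fun ⟨m, hnm, D, hD, _, hXD⟩ => h m hnm ?_⟩
    exact show Principal (X.restrict m) from mem_cyl_iff.mp hXD ▸ hD

theorem mem_Gamma_iff_isGreatest {n : ℕ} {C : FinCauset n} (hC : Principal C) :
    X ∈ Gamma C ↔ C = X.restrict n ∧ IsGreatest X.principalSizes n := by
  rw [mem_Gamma_iff, mem_cyl_iff]
  refine and_congr_right fun hCX => ⟨fun h => ⟨?_, fun m hm => ?_⟩, fun h m hnm hm => ?_⟩
  · exact show Principal (X.restrict n) from hCX ▸ hC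
  · by_contra! hnm
    exact h m hnm hm
  · exact (h.2 hm).not_gt hnm

end Causet

open Causet

theorem Gamma_subset_Ffin {n : ℕ} (C : FinCauset n) : Gamma C ⊆ Ffin := fun _ hX =>
  mem_Ffin_iff_bddAbove.mpr
    ⟨n, fun _ hm => not_lt.mp fun hnm => (mem_Gamma_iff.mp hX).2 _ hnm hm⟩

theorem eq_of_mem_Gamma {n m : ℕ} {C : FinCauset n} {D : FinCauset m} (hC : Principal C)
    (hD : Principal D) {X : Causet} (hXC : X ∈ Gamma C) (hXD : X ∈ Gamma D) :
    n = m ∧ C.rel = D.rel := by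
  obtain ⟨rfl, hn⟩ := (mem_Gamma_iff_isGreatest hC).mp hXC
  obtain ⟨rfl, hm⟩ := (mem_Gamma_iff_isGreatest hD).mp hXD
  obtain rfl := hn.unique hm
  exact ⟨rfl, rfl⟩

/-- The Γ_{C_n}, over all principal finite causets, partition 𝔉. -/
theorem stmt_5 :
    (∀ n (C : FinCauset n), Principal C → Gamma C ⊆ Ffin) ∧
    (∀ n m (C : FinCauset n) (D : FinCauset m), Principal C → Principal D →
      ¬ (n = m ∧ C.rel = D.rel) → Disjoint (Gamma C) (Gamma D)) ∧
    (∀ X ∈ Ffin, ∃ n, ∃ C : FinCauset n, Principal C ∧ X ∈ Gamma C ∧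
      ∀ m (D : FinCauset m), Principal D → X ∈ Gamma D → n = m ∧ C.rel = D.rel) := by
  refine ⟨fun n C _ => Gamma_subset_Ffin C, fun n m C D hC hD hne => ?_, fun X hX => ?_⟩
  · exact Set.disjoint_left.mpr fun X hXC hXD => hne (eq_of_mem_Gamma hC hD hXC hXD)
  · obtain ⟨n, hn⟩ :=
      (mem_Ffin_iff_bddAbove.mp hX).exists_isGreatest_of_nonempty ⟨1, one_mem_principalSizes⟩
    have hXn : X ∈ Gamma (X.restrict n) := (mem_Gamma_iff_isGreatest hn.1).mpr ⟨rfl, hn⟩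
    exact ⟨n, X.restrict n, hn.1, hXn, fun m D hD hXD => eq_of_mem_Gamma hn.1 hD hXn hXD⟩
end

section
/- R_b ⊆ 𝔐_b ∩ R: every covariant event E ∈ R satisfying (B_∞^c ⊆ E or B_∞^c ⊆ Ω \ E) belongs to the σ-algebra 𝔐_b generated by the principal cylinder sets. -/
open MeasurableSpace MeasureTheory Set

/-!
A break of a causet has as its past an initial segment `{0, …, k-1}` lying entirely below `k`,
so the restriction of the causet to `{0, …, k}` is principal. Hence every causet in `B_∞` has
infinitely many principal initial restrictions. On the set of such causets, the trace of a
cylinder set is a countable union of principal cylinder sets cut down to that set, which itself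
lies in `𝔐_b`; so the trace of all of `𝔐` on it lies in `𝔐_b`. An event containing all or none
of `B_∞ᶜ` is, up to complement, contained in `B_∞` and therefore equal to its own trace.
-/

theorem MeasurableSpace.measurableSet_inter_of_generateFrom {α : Type*} {m : MeasurableSpace α}
    {C : Set (Set α)} {S : Set α} (hS : MeasurableSet[m] S)
    (hC : ∀ t ∈ C, MeasurableSet[m] (t ∩ S)) {F : Set α}
    (hF : MeasurableSet[generateFrom C] F) : MeasurableSet[m] (F ∩ S) := by
  induction F, hF using generateFrom_induction with
  | hC t ht => exact hC t ht
  | empty => simp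
  | compl t _ ih =>
    have : tᶜ ∩ S = S \ (t ∩ S) := by ext; simp [and_comm]
    rw [this]
    exact hS.diff ih
  | iUnion s _ ih =>
    rw [iUnion_inter]
    exact .iUnion ih

theorem FinCauset.ext_of_rel {n : ℕ} {C D : FinCauset n}
    (h : ∀ x y, x < n → y < n → (C.rel x y ↔ D.rel x y)) : C = D := by
  cases C with | mk relC boundedC _ _ _ =>
  cases D with | mk relD boundedD _ _ _ =>
  congr
  funext x y
  by_cases hxy : x < n ∧ y < n
  · exact propext (h x y hxy.1 hxy.2)
  · exact propext ⟨fun hr => absurd (boundedC x y hr) hxy, fun hr => absurd (boundedD x y hr) hxy⟩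

instance (n : ℕ) : Finite (FinCauset n) :=
  Finite.of_injective (fun C : FinCauset n => fun i j : Fin n => C.rel i j) fun _ _ h =>
    FinCauset.ext_of_rel fun x y hx hy => by
      simpa using congrFun (congrFun h ⟨x, hx⟩) ⟨y, hy⟩

def Causet.restrict_s10 (D : Causet) (n : ℕ) : FinCauset n where
  rel x y := D.rel x y ∧ x < n ∧ y < n
  bounded _ _ h := h.2
  irrefl x h := D.irrefl x h.1
  trans x y z h₁ h₂ := ⟨D.trans x y z h₁.1 h₂.1, h₁.2.1, h₂.2.2⟩
  lt_of_rel x y h := D.lt_of_rel x y h.1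

theorem Causet.mem_cyl_restrict (D : Causet) (n : ℕ) : D ∈ cyl (D.restrict_s10 n) := by
  intro x y hx hy
  simp [Causet.restrict_s10, hx, hy]

theorem cyl_subset_cyl {m n : ℕ} {D : FinCauset m} {C : FinCauset n} (hDC : RestrEq D C)
    (hnm : n ≤ m) : cyl D ⊆ cyl C := fun _ hX x y hx hy => by
  rw [hX x y (by omega) (by omega), hDC x y hx hy]

theorem restrEq_of_mem_cyl {m n : ℕ} {D : FinCauset m} {C : FinCauset n} {X : Causet}
    (hXD : X ∈ cyl D) (hXC : X ∈ cyl C) (hnm : n ≤ m) : RestrEq D C := fun x y hx hy => by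
  rw [← hXD x y (by omega) (by omega), hXC x y hx hy]

theorem FinCauset.rel_top_of_maximal_unique {n : ℕ} (C : FinCauset (n + 1))
    (h : ∀ x, FMaximalBelow C (n + 1) x → x = n) (a : ℕ) (ha : a < n) : C.rel a n := by
  by_cases hmax : FMaximalBelow C (n + 1) a
  · exact absurd (h a hmax) ha.ne
  · obtain ⟨y, hy, hay⟩ : ∃ y < n + 1, C.rel a y := by
      simpa [FMaximalBelow, ha.trans (Nat.lt_succ_self n)] using hmax
    rcases (Nat.lt_succ_iff.1 hy).eq_or_lt with rfl | hyn
    · exact hay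
    · exact C.trans _ _ _ hay (rel_top_of_maximal_unique C h y hyn)
termination_by n - a
decreasing_by have := C.lt_of_rel a y hay; omega

theorem principal_iff_rel_top {n : ℕ} (C : FinCauset (n + 1)) :
    Principal C ↔ ∀ a < n, C.rel a n := by
  have hn : FMaximalBelow C (n + 1) n :=
    ⟨Nat.lt_succ_self n, fun y _ hr => by have := C.lt_of_rel n y hr; omega⟩
  constructor
  · rintro ⟨x, -, hunique⟩
    exact C.rel_top_of_maximal_unique fun y hy => (hunique y hy).trans (hunique n hn).symm
  · refine fun h => ⟨n, hn, fun y hy => ?_⟩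
    by_contra hne
    exact hy.2 n (Nat.lt_succ_self n) (h y (by have := hy.1; omega))

def principalAt (m : ℕ) : Set Causet := { X | ∀ a < m, X.rel a m }

theorem principal_restrict_iff {X : Causet} {m : ℕ} :
    Principal (X.restrict_s10 (m + 1)) ↔ X ∈ principalAt m := by
  rw [principal_iff_rel_top]
  exact forall₂_congr fun a ha => ⟨fun h => h.1, fun h => ⟨h, by omega, by omega⟩⟩

theorem mem_principalAt_of_mem_cyl {m : ℕ} {C : FinCauset (m + 1)} (hC : Principal C)
    {X : Causet} (hX : X ∈ cyl C) : X ∈ principalAt m := fun a ha =>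
  (hX a m (by omega) (by omega)).2 ((principal_iff_rel_top C).1 hC a ha)

theorem principalAt_eq_iUnion (m : ℕ) :
    principalAt m = ⋃ (C : FinCauset (m + 1)) (_ : Principal C), cyl C := by
  ext X
  simp only [mem_iUnion]
  exact ⟨fun h => ⟨_, principal_restrict_iff.2 h, X.mem_cyl_restrict _⟩,
    fun ⟨_, hC, hX⟩ => mem_principalAt_of_mem_cyl hC hX⟩

theorem measurableSet_cyl_of_principal {n : ℕ} {C : FinCauset n} (hC : Principal C) :
    MeasurableSet[principalCylAlgebra] (cyl C) :=
  measurableSet_generateFrom ⟨n, C, hC, rfl⟩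

theorem measurableSet_principalAt (m : ℕ) :
    MeasurableSet[principalCylAlgebra] (principalAt m) := by
  rw [principalAt_eq_iUnion]
  exact .iUnion fun _ => .iUnion measurableSet_cyl_of_principal

theorem measurableSet_cyl_inter_principalAt {n m : ℕ} (C : FinCauset n) (hnm : n ≤ m + 1) :
    MeasurableSet[principalCylAlgebra] (cyl C ∩ principalAt m) := by
  rw [principalAt_eq_iUnion, inter_iUnion₂]
  refine .iUnion fun D => .iUnion fun hD => ?_
  by_cases hDC : RestrEq D C
  · rw [inter_eq_right.2 (cyl_subset_cyl hDC hnm)]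
    exact measurableSet_cyl_of_principal hD
  · rw [show cyl C ∩ cyl D = ∅ from
      eq_empty_of_forall_notMem fun _ hX => hDC (restrEq_of_mem_cyl hX.2 hX.1 hnm)]
    exact measurableSet_empty _

def infinitelyPrincipal : Set Causet := { X | { m | X ∈ principalAt m }.Infinite }

theorem infinitelyPrincipal_eq_iInter_iUnion :
    infinitelyPrincipal = ⋂ N, ⋃ (m) (_ : N ≤ m), principalAt m := by
  ext X
  simp [infinitelyPrincipal, ← Nat.frequently_atTop_iff_infinite, Filter.frequently_atTop]

theorem measurableSet_infinitelyPrincipal :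
    MeasurableSet[principalCylAlgebra] infinitelyPrincipal := by
  rw [infinitelyPrincipal_eq_iInter_iUnion]
  exact .iInter fun _ => .iUnion fun m => .iUnion fun _ => measurableSet_principalAt m

theorem measurableSet_cyl_inter_infinitelyPrincipal {n : ℕ} (C : FinCauset n) :
    MeasurableSet[principalCylAlgebra] (cyl C ∩ infinitelyPrincipal) := by
  have : cyl C ∩ infinitelyPrincipal =
      ⋃ (m) (_ : n ≤ m), cyl C ∩ principalAt m ∩ infinitelyPrincipal := by
    ext X
    simp only [mem_inter_iff, mem_iUnion]
    refine ⟨fun ⟨hXC, hX⟩ => ?_, fun ⟨_, _, ⟨hXC, _⟩, hX⟩ => ⟨hXC, hX⟩⟩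
    obtain ⟨m, hm, hnm⟩ := Set.Infinite.exists_gt hX n
    exact ⟨m, hnm.le, ⟨hXC, hm⟩, hX⟩
  rw [this]
  exact .iUnion fun m => .iUnion fun hnm =>
    (measurableSet_cyl_inter_principalAt C (by omega)).inter measurableSet_infinitelyPrincipal

theorem IsBreakPast.exists_eq_Iio_mem_principalAt {D : Causet} {A : Set ℕ}
    (hA : IsBreakPast D A) : ∃ k, A = Iio k ∧ D ∈ principalAt k := by
  obtain ⟨-, hAc, hrel⟩ := hA
  have hk : sInf Aᶜ ∈ Aᶜ := Nat.sInf_mem hAc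
  have hAk : A = Iio (sInf Aᶜ) := by
    ext a
    refine ⟨fun ha => D.lt_of_rel a _ (hrel a ha _ hk), fun ha => ?_⟩
    by_contra hna
    exact (Nat.sInf_le hna).not_gt ha
  refine ⟨_, hAk, fun a ha => hrel a ?_ _ hk⟩
  rwa [hAk]

theorem Binf_subset_infinitelyPrincipal : Binf ⊆ infinitelyPrincipal := fun _ hD =>
  Infinite.of_image Iio <| hD.mono fun _ hA =>
    let ⟨k, hAk, hk⟩ := hA.exists_eq_Iio_mem_principalAt
    ⟨k, hk, hAk.symm⟩

theorem measurableSet_of_subset_Binf {F : Set Causet} (hF : MeasurableSet[cylAlgebra] F)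
    (hFB : F ⊆ Binf) : MeasurableSet[principalCylAlgebra] F := by
  have hF' := MeasurableSpace.measurableSet_inter_of_generateFrom
    measurableSet_infinitelyPrincipal (by
      rintro _ ⟨_, _, C, rfl⟩
      exact measurableSet_cyl_inter_infinitelyPrincipal C) hF
  rwa [inter_eq_left.2 (hFB.trans Binf_subset_infinitelyPrincipal)] at hF'

/-- R_b ⊆ 𝔐_b ∩ R. -/
theorem stmt_10 (E : Set Causet) (hE : MemR E)
    (hb : Binfᶜ ⊆ E ∨ Binfᶜ ⊆ Eᶜ) :
    MeasurableSet[principalCylAlgebra] E := by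
  rcases hb with hb | hb
  · simpa using (measurableSet_of_subset_Binf hE.1.compl (compl_subset_comm.1 hb)).compl
  · exact measurableSet_of_subset_Binf hE.1 (compl_subset_compl.1 hb)
end
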